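/- Let U ⊆ ℝ^n be open and let E be a smooth vector field on U such that: (a) for all u ∈ U and all distinct α, β ∈ {1,…,r}, E^{1(α)}(u) ≠ E^{1(β)}(u); and (b) for every α ∈ {1,…,r} with m_α ≥ 2, E^{2(α)}(u) ≠ 0 for all u ∈ U. If the Nijenhuis torsion of L = E∘ vanishes on U, then E is an eventual identity on U, i.e. its eventual-identity defect satisfies K(X,Y) = 0 for all smooth vector fields X, Y on U. -/

import Mathlib

open scoped BigOperators

section Defs

variable {ι : Type*} [Fintype ι] [DecidableEq ι]

/-- Partial derivative of a scalar function in the `i`-th coordinate direction. -/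
noncomputable def pd (i : ι) (f : (ι → ℝ) → ℝ) (u : ι → ℝ) : ℝ :=
  fderiv ℝ f u (Pi.single i 1)

/-- Lie bracket of two vector fields on `ι → ℝ`. -/
noncomputable def lieBr (X Y : (ι → ℝ) → (ι → ℝ)) (u : ι → ℝ) : ι → ℝ :=
  fun i => ∑ s, (X u s * pd s (fun v => Y v i) u - Y u s * pd s (fun v => X v i) u)

/-- Nijenhuis torsion of a pointwise operator `L` (applied pointwise to vector fields):
`N_L(X,Y) = [LX,LY] − L[LX,Y] − L[X,LY] + L²[X,Y]`. -/
noncomputable def nij (L : (ι → ℝ) → (ι → ℝ) → (ι → ℝ))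
    (X Y : (ι → ℝ) → (ι → ℝ)) (u : ι → ℝ) : ι → ℝ :=
  lieBr (fun v => L v (X v)) (fun v => L v (Y v)) u
  - L u (lieBr (fun v => L v (X v)) Y u)
  - L u (lieBr X (fun v => L v (Y v)) u)
  + L u (L u (lieBr X Y u))

end Defs

section Block

variable {r : ℕ}

/-- David–Hertling block product on `ℝ^n`, `n = m 0 + ⋯ + m (r-1)` (0-based indices:
`(u∘v)_{i(α)} = Σ_{j+k=i} u_{j(α)} v_{k(α)}`). -/
noncomputable def blockProd (m : Fin r → ℕ)
    (u v : ((α : Fin r) × Fin (m α)) → ℝ) : ((α : Fin r) × Fin (m α)) → ℝ :=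
  fun i => ∑ j : Fin (m i.1), ∑ k : Fin (m i.1),
    if (j : ℕ) + (k : ℕ) = (i.2 : ℕ) then u ⟨i.1, j⟩ * v ⟨i.1, k⟩ else 0

/-- Unit of the block product: `e^{i(α)} = δ^i_1`. -/
noncomputable def blockUnit (m : Fin r → ℕ) : ((α : Fin r) × Fin (m α)) → ℝ :=
  fun i => if (i.2 : ℕ) = 0 then 1 else 0

/-- Eventual-identity defect of a vector field `E`:
`K(X,Y) = [E, X∘Y] − [E,X]∘Y − X∘[E,Y] − [e,E]∘X∘Y`. -/
noncomputable def Kdef (m : Fin r → ℕ)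
    (E X Y : (((α : Fin r) × Fin (m α)) → ℝ) → ((α : Fin r) × Fin (m α)) → ℝ)
    (u : ((α : Fin r) × Fin (m α)) → ℝ) : ((α : Fin r) × Fin (m α)) → ℝ :=
  lieBr E (fun v => blockProd m (X v) (Y v)) u
  - blockProd m (lieBr E X u) (Y u)
  - blockProd m (X u) (lieBr E Y u)
  - blockProd m (blockProd m (lieBr (fun _ => blockUnit m) E u) (X u)) (Y u)

end Block

section AuxDH
variable {r : ℕ}

abbrev BV (m : Fin r → ℕ) : Type := ((α : Fin r) × Fin (m α)) → ℝ

variable {m : Fin r → ℕ}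

lemma dh_sum_ite_fin {M t : ℕ} (f : Fin M → ℝ) :
    (∑ j : Fin M, if (j : ℕ) = t then f j else 0) = if h : t < M then f ⟨t, h⟩ else 0 := by
  by_cases h : t < M
  · rw [dif_pos h, Finset.sum_eq_single_of_mem (⟨t, h⟩ : Fin M) (Finset.mem_univ _)
      (fun b _ hb => if_neg (fun hc => hb (Fin.ext hc)))]
    simp
  · rw [dif_neg h]
    exact Finset.sum_eq_zero fun j _ => if_neg (fun hj : (j:ℕ) = t => h (hj ▸ j.isLt))

lemma dh_bp_add_left (u v w : BV m) :
    blockProd m (u + v) w = blockProd m u w + blockProd m v w := by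
  funext i
  simp only [blockProd, Pi.add_apply]
  rw [← Finset.sum_add_distrib]
  refine Finset.sum_congr rfl fun j _ => ?_
  rw [← Finset.sum_add_distrib]
  refine Finset.sum_congr rfl fun k _ => ?_
  by_cases h : (j:ℕ)+(k:ℕ) = (i.2:ℕ)
  · simp only [if_pos h]; ring
  · simp only [if_neg h]; ring

lemma dh_bp_smul_left (c : ℝ) (u w : BV m) :
    blockProd m (c • u) w = c • blockProd m u w := by
  funext i
  simp only [blockProd, Pi.smul_apply, smul_eq_mul]
  rw [Finset.mul_sum]
  refine Finset.sum_congr rfl fun j _ => ?_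
  rw [Finset.mul_sum]
  refine Finset.sum_congr rfl fun k _ => ?_
  by_cases h : (j:ℕ)+(k:ℕ) = (i.2:ℕ)
  · simp only [if_pos h]; ring
  · simp only [if_neg h]; ring

lemma dh_bp_zero_left (w : BV m) : blockProd m 0 w = 0 := by
  funext i
  simp [blockProd]

lemma dh_bp_comm (u v : BV m) : blockProd m u v = blockProd m v u := by
  funext i
  simp only [blockProd]
  rw [Finset.sum_comm]
  refine Finset.sum_congr rfl fun k _ => Finset.sum_congr rfl fun j _ => ?_
  exact if_congr (by omega) (mul_comm _ _) rfl

lemma dh_bp_add_right (u v w : BV m) :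
    blockProd m u (v + w) = blockProd m u v + blockProd m u w := by
  rw [dh_bp_comm, dh_bp_add_left, dh_bp_comm v u, dh_bp_comm w u]

lemma dh_bp_smul_right (c : ℝ) (u w : BV m) :
    blockProd m u (c • w) = c • blockProd m u w := by
  rw [dh_bp_comm, dh_bp_smul_left, dh_bp_comm w u]

lemma dh_bp_zero_right (u : BV m) : blockProd m u 0 = 0 := by
  rw [dh_bp_comm, dh_bp_zero_left]

lemma dh_bp_neg_left (u w : BV m) : blockProd m (-u) w = -(blockProd m u w) := by
  have h : (-u) = (-1 : ℝ) • u := by rw [neg_one_smul]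
  rw [h, dh_bp_smul_left, neg_one_smul]

lemma dh_bp_neg_right (u w : BV m) : blockProd m u (-w) = -(blockProd m u w) := by
  rw [dh_bp_comm, dh_bp_neg_left, dh_bp_comm w u]

lemma dh_bp_sub_left (u v w : BV m) :
    blockProd m (u - v) w = blockProd m u w - blockProd m v w := by
  rw [sub_eq_add_neg, dh_bp_add_left, dh_bp_neg_left, ← sub_eq_add_neg]

lemma dh_bp_sub_right (u v w : BV m) :
    blockProd m u (v - w) = blockProd m u v - blockProd m u w := by
  rw [dh_bp_comm, dh_bp_sub_left, dh_bp_comm v u, dh_bp_comm w u]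

lemma dh_bp_one_left (v : BV m) : blockProd m (blockUnit m) v = v := by
  funext i
  have step : ∀ j k : Fin (m i.1),
      (if (j:ℕ)+(k:ℕ) = (i.2:ℕ) then blockUnit m ⟨i.1,j⟩ * v ⟨i.1,k⟩ else 0)
      = if (j:ℕ) = 0 then (if (k:ℕ) = (i.2:ℕ) then v ⟨i.1,k⟩ else 0) else 0 := by
    intro j k
    simp only [blockUnit]
    split_ifs <;> (first | (exfalso; omega) | ring)
  calc blockProd m (blockUnit m) v i
      = ∑ j : Fin (m i.1), ∑ k : Fin (m i.1),
          (if (j:ℕ) = 0 then (if (k:ℕ) = (i.2:ℕ) then v ⟨i.1,k⟩ else 0) else 0) :=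
        Finset.sum_congr rfl fun j _ => Finset.sum_congr rfl fun k _ => step j k
    _ = ∑ j : Fin (m i.1), (if (j:ℕ) = 0 then (∑ k : Fin (m i.1), if (k:ℕ) = (i.2:ℕ) then v ⟨i.1,k⟩ else 0) else 0) := by
        refine Finset.sum_congr rfl fun j _ => ?_
        by_cases hj : (j:ℕ) = 0
        · simp only [if_pos hj]
        · simp only [if_neg hj, Finset.sum_const_zero]
    _ = if h : 0 < m i.1 then (∑ k : Fin (m i.1), if (k:ℕ) = (i.2:ℕ) then v ⟨i.1,k⟩ else 0) else 0 :=
        dh_sum_ite_fin _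
    _ = ∑ k : Fin (m i.1), if (k:ℕ) = (i.2:ℕ) then v ⟨i.1,k⟩ else 0 := dif_pos i.2.pos
    _ = if h : (i.2:ℕ) < m i.1 then v ⟨i.1, ⟨(i.2:ℕ), h⟩⟩ else 0 := dh_sum_ite_fin _
    _ = v i := by rw [dif_pos i.2.isLt]

lemma dh_bp_one_right (v : BV m) : blockProd m v (blockUnit m) = v := by
  rw [dh_bp_comm, dh_bp_one_left]


lemma dh_sum4_reorder {M : ℕ} (T : Fin M → Fin M → Fin M → Fin M → ℝ) :
    (∑ j : Fin M, ∑ c : Fin M, ∑ a : Fin M, ∑ b : Fin M, T j c a b)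
    = ∑ a : Fin M, ∑ b : Fin M, ∑ c : Fin M, ∑ j : Fin M, T j c a b := calc
  (∑ j : Fin M, ∑ c : Fin M, ∑ a : Fin M, ∑ b : Fin M, T j c a b)
      = ∑ c : Fin M, ∑ j : Fin M, ∑ a : Fin M, ∑ b : Fin M, T j c a b := Finset.sum_comm
  _ = ∑ c : Fin M, ∑ a : Fin M, ∑ j : Fin M, ∑ b : Fin M, T j c a b :=
      Finset.sum_congr rfl fun c _ => Finset.sum_comm
  _ = ∑ c : Fin M, ∑ a : Fin M, ∑ b : Fin M, ∑ j : Fin M, T j c a b :=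
      Finset.sum_congr rfl fun c _ => Finset.sum_congr rfl fun a _ => Finset.sum_comm
  _ = ∑ a : Fin M, ∑ c : Fin M, ∑ b : Fin M, ∑ j : Fin M, T j c a b := Finset.sum_comm
  _ = ∑ a : Fin M, ∑ b : Fin M, ∑ c : Fin M, ∑ j : Fin M, T j c a b :=
      Finset.sum_congr rfl fun a _ => Finset.sum_comm

lemma dh_sum3_reorder {M : ℕ} (T : Fin M → Fin M → Fin M → ℝ) :
    (∑ j : Fin M, ∑ b : Fin M, ∑ c : Fin M, T j b c)
    = ∑ b : Fin M, ∑ c : Fin M, ∑ j : Fin M, T j b c := calc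
  (∑ j : Fin M, ∑ b : Fin M, ∑ c : Fin M, T j b c)
      = ∑ b : Fin M, ∑ j : Fin M, ∑ c : Fin M, T j b c := Finset.sum_comm
  _ = ∑ b : Fin M, ∑ c : Fin M, ∑ j : Fin M, T j b c :=
      Finset.sum_congr rfl fun b _ => Finset.sum_comm

lemma dh_collapse_left {M t : ℕ} (ht : t < M) (F : Fin M → Fin M → Fin M → ℝ) :
    (∑ j : Fin M, ∑ c : Fin M, if (j:ℕ) + (c:ℕ) = t then
        (∑ a : Fin M, ∑ b : Fin M, if (a:ℕ)+(b:ℕ) = (j:ℕ) then F a b c else 0) else 0)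
    = ∑ a : Fin M, ∑ b : Fin M, ∑ c : Fin M, if (a:ℕ)+(b:ℕ)+(c:ℕ) = t then F a b c else 0 := by
  have step : ∀ j c : Fin M,
      (if (j:ℕ) + (c:ℕ) = t then
        (∑ a : Fin M, ∑ b : Fin M, if (a:ℕ)+(b:ℕ) = (j:ℕ) then F a b c else 0) else 0)
      = ∑ a : Fin M, ∑ b : Fin M,
          (if (j:ℕ) = (a:ℕ)+(b:ℕ) then (if (a:ℕ)+(b:ℕ)+(c:ℕ) = t then F a b c else 0) else 0) := by
    intro j c
    by_cases hjc : (j:ℕ) + (c:ℕ) = t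
    · rw [if_pos hjc]
      refine Finset.sum_congr rfl fun a _ => Finset.sum_congr rfl fun b _ => ?_
      by_cases hab : (a:ℕ)+(b:ℕ) = (j:ℕ)
      · rw [if_pos hab, if_pos (by omega), if_pos (by omega)]
      · rw [if_neg hab, if_neg (by omega)]
    · rw [if_neg hjc]
      symm
      refine Finset.sum_eq_zero fun a _ => Finset.sum_eq_zero fun b _ => ?_
      by_cases hab : (j:ℕ) = (a:ℕ)+(b:ℕ)
      · rw [if_pos hab, if_neg (by omega)]
      · rw [if_neg hab]
  simp only [step]
  rw [dh_sum4_reorder]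
  refine Finset.sum_congr rfl fun a _ => Finset.sum_congr rfl fun b _ =>
    Finset.sum_congr rfl fun c _ => ?_
  rw [dh_sum_ite_fin]
  by_cases h : (a:ℕ)+(b:ℕ) < M
  · rw [dif_pos h]
  · rw [dif_neg h, if_neg (by omega)]

lemma dh_collapse_right {M t : ℕ} (ht : t < M) (F : Fin M → Fin M → Fin M → ℝ) :
    (∑ a : Fin M, ∑ j : Fin M, if (a:ℕ) + (j:ℕ) = t then
        (∑ b : Fin M, ∑ c : Fin M, if (b:ℕ)+(c:ℕ) = (j:ℕ) then F a b c else 0) else 0)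
    = ∑ a : Fin M, ∑ b : Fin M, ∑ c : Fin M, if (a:ℕ)+((b:ℕ)+(c:ℕ)) = t then F a b c else 0 := by
  refine Finset.sum_congr rfl fun a _ => ?_
  have step : ∀ j : Fin M,
      (if (a:ℕ) + (j:ℕ) = t then
        (∑ b : Fin M, ∑ c : Fin M, if (b:ℕ)+(c:ℕ) = (j:ℕ) then F a b c else 0) else 0)
      = ∑ b : Fin M, ∑ c : Fin M,
          (if (j:ℕ) = (b:ℕ)+(c:ℕ) then (if (a:ℕ)+((b:ℕ)+(c:ℕ)) = t then F a b c else 0) else 0) := by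
    intro j
    by_cases haj : (a:ℕ) + (j:ℕ) = t
    · rw [if_pos haj]
      refine Finset.sum_congr rfl fun b _ => Finset.sum_congr rfl fun c _ => ?_
      by_cases hbc : (b:ℕ)+(c:ℕ) = (j:ℕ)
      · rw [if_pos hbc, if_pos (by omega), if_pos (by omega)]
      · rw [if_neg hbc, if_neg (by omega)]
    · rw [if_neg haj]
      symm
      refine Finset.sum_eq_zero fun b _ => Finset.sum_eq_zero fun c _ => ?_
      by_cases hbc : (j:ℕ) = (b:ℕ)+(c:ℕ)
      · rw [if_pos hbc, if_neg (by omega)]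
      · rw [if_neg hbc]
  simp only [step]
  rw [dh_sum3_reorder]
  refine Finset.sum_congr rfl fun b _ => Finset.sum_congr rfl fun c _ => ?_
  rw [dh_sum_ite_fin]
  by_cases h : (b:ℕ)+(c:ℕ) < M
  · rw [dif_pos h]
  · rw [dif_neg h, if_neg (by omega)]

lemma dh_bp_assoc (u v w : BV m) :
    blockProd m (blockProd m u v) w = blockProd m u (blockProd m v w) := by
  funext i
  simp only [blockProd]
  simp only [Finset.sum_mul, Finset.mul_sum, ite_mul, mul_ite, zero_mul, mul_zero]
  rw [dh_collapse_left i.2.isLt (fun a b c => u ⟨i.1,a⟩ * v ⟨i.1,b⟩ * w ⟨i.1,c⟩),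
    dh_collapse_right i.2.isLt (fun a b c => u ⟨i.1,a⟩ * (v ⟨i.1,b⟩ * w ⟨i.1,c⟩))]
  refine Finset.sum_congr rfl fun a _ => Finset.sum_congr rfl fun b _ =>
    Finset.sum_congr rfl fun c _ => if_congr (by omega) (by ring) rfl


noncomputable def pwr (m : Fin r → ℕ) (x : BV m) : ℕ → BV m
  | 0 => blockUnit m
  | k+1 => blockProd m x (pwr m x k)

lemma dh_pwr_add (x : BV m) (j k : ℕ) :
    pwr m x (j + k) = blockProd m (pwr m x j) (pwr m x k) := by
  induction j with
  | zero =>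
    rw [Nat.zero_add, show pwr m x 0 = blockUnit m from rfl, dh_bp_one_left]
  | succ j ih =>
    have h1 : j + 1 + k = (j + k) + 1 := by omega
    rw [h1]
    show blockProd m x (pwr m x (j+k)) = blockProd m (blockProd m x (pwr m x j)) (pwr m x k)
    rw [ih, dh_bp_assoc]

lemma dh_ord_mul {z w : BV m} {α : Fin r} {a b : ℕ}
    (hz : ∀ i : Fin (m α), (i:ℕ) < a → z ⟨α, i⟩ = 0)
    (hw : ∀ i : Fin (m α), (i:ℕ) < b → w ⟨α, i⟩ = 0) :
    ∀ i : Fin (m α), (i:ℕ) < a + b → blockProd m z w ⟨α, i⟩ = 0 := by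
  intro i hi
  show (∑ j : Fin (m α), ∑ k : Fin (m α),
      if (j:ℕ)+(k:ℕ) = ((i:ℕ)) then z ⟨α,j⟩ * w ⟨α,k⟩ else 0) = 0
  refine Finset.sum_eq_zero fun j _ => Finset.sum_eq_zero fun k _ => ?_
  by_cases hjk : (j:ℕ)+(k:ℕ) = (i:ℕ)
  · rw [if_pos hjk]
    by_cases hj : (j:ℕ) < a
    · rw [hz j hj, zero_mul]
    · rw [hw k (by omega), mul_zero]
  · rw [if_neg hjk]

lemma dh_ord_mul_lead {z w : BV m} {α : Fin r} {a b : ℕ}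
    (ha : a < m α) (hb : b < m α) (hab : a + b < m α)
    (hz : ∀ i : Fin (m α), (i:ℕ) < a → z ⟨α, i⟩ = 0)
    (hw : ∀ i : Fin (m α), (i:ℕ) < b → w ⟨α, i⟩ = 0) :
    blockProd m z w ⟨α, ⟨a + b, hab⟩⟩ = z ⟨α, ⟨a, ha⟩⟩ * w ⟨α, ⟨b, hb⟩⟩ := by
  show (∑ j : Fin (m α), ∑ k : Fin (m α),
      if (j:ℕ)+(k:ℕ) = a + b then z ⟨α,j⟩ * w ⟨α,k⟩ else 0) = _
  have step : ∀ j k : Fin (m α),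
      (if (j:ℕ)+(k:ℕ) = a + b then z ⟨α,j⟩ * w ⟨α,k⟩ else 0)
      = if (j:ℕ) = a then (if (k:ℕ) = b then z ⟨α,j⟩ * w ⟨α,k⟩ else 0) else 0 := by
    intro j k
    by_cases hj : (j:ℕ) = a
    · by_cases hk : (k:ℕ) = b
      · rw [if_pos (by omega), if_pos hj, if_pos hk]
      · rw [if_neg (by omega), if_pos hj, if_neg hk]
    · rw [if_neg hj]
      by_cases hjk : (j:ℕ)+(k:ℕ) = a+b
      · rw [if_pos hjk]
        by_cases hja : (j:ℕ) < a
        · rw [hz j hja, zero_mul]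
        · rw [hw k (by omega), mul_zero]
      · rw [if_neg hjk]
  calc (∑ j : Fin (m α), ∑ k : Fin (m α),
      if (j:ℕ)+(k:ℕ) = a + b then z ⟨α,j⟩ * w ⟨α,k⟩ else 0)
      = ∑ j : Fin (m α), if (j:ℕ) = a then
          (∑ k : Fin (m α), if (k:ℕ) = b then z ⟨α,j⟩ * w ⟨α,k⟩ else 0) else 0 := by
        refine Finset.sum_congr rfl fun j _ => ?_
        rw [Finset.sum_congr rfl fun k _ => step j k]
        by_cases hj : (j:ℕ) = a
        · simp only [if_pos hj]
        · simp only [if_neg hj, Finset.sum_const_zero]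
    _ = if h : a < m α then
          (∑ k : Fin (m α), if (k:ℕ) = b then z ⟨α,⟨a,h⟩⟩ * w ⟨α,k⟩ else 0) else 0 :=
        dh_sum_ite_fin _
    _ = ∑ k : Fin (m α), if (k:ℕ) = b then z ⟨α,⟨a,ha⟩⟩ * w ⟨α,k⟩ else 0 := dif_pos ha
    _ = if h : b < m α then z ⟨α,⟨a,ha⟩⟩ * w ⟨α,⟨b,h⟩⟩ else 0 := dh_sum_ite_fin _
    _ = z ⟨α,⟨a,ha⟩⟩ * w ⟨α,⟨b,hb⟩⟩ := dif_pos hb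

lemma dh_pwr_ord {x : BV m} {α : Fin r}
    (hx1 : ∀ i : Fin (m α), (i:ℕ) < 1 → x ⟨α, i⟩ = 0) (k : ℕ) :
    ∀ i : Fin (m α), (i:ℕ) < k → pwr m x k ⟨α, i⟩ = 0 := by
  induction k with
  | zero => intro i hi; exact absurd hi (by omega)
  | succ k ih =>
    intro i hi
    exact dh_ord_mul hx1 ih i (by omega)

lemma dh_block_local {z : BV m} (w : BV m) {β : Fin r}
    (hz : ∀ i : Fin (m β), z ⟨β, i⟩ = 0) :
    ∀ i : Fin (m β), blockProd m z w ⟨β, i⟩ = 0 := fun i =>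
  dh_ord_mul (a := m β) (b := 0) (fun i' _ => hz i') (fun _ hi => absurd hi (Nat.not_lt_zero _))
    i (by simpa using i.isLt)

lemma dh_hom0 (hm : ∀ α, 0 < m α) {z w : BV m} {α : Fin r} :
    blockProd m z w ⟨α, ⟨0, hm α⟩⟩ = z ⟨α, ⟨0, hm α⟩⟩ * w ⟨α, ⟨0, hm α⟩⟩ :=
  dh_ord_mul_lead (a := 0) (b := 0) (hm α) (hm α) (by simpa using hm α)
    (fun _ hi => absurd hi (Nat.not_lt_zero _)) (fun _ hi => absurd hi (Nat.not_lt_zero _))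

lemma dh_pwr_hom0 (hm : ∀ α, 0 < m α) (x : BV m) (α : Fin r) (k : ℕ) :
    pwr m x k ⟨α, ⟨0, hm α⟩⟩ = x ⟨α, ⟨0, hm α⟩⟩ ^ k := by
  induction k with
  | zero =>
    show blockUnit m ⟨α, ⟨0, hm α⟩⟩ = _
    simp [blockUnit]
  | succ k ih =>
    show blockProd m x (pwr m x k) ⟨α, ⟨0, hm α⟩⟩ = _
    rw [dh_hom0 hm, ih]
    ring

lemma dh_pwr_lead (x : BV m) (α : Fin r)
    (hx1 : ∀ i : Fin (m α), (i:ℕ) < 1 → x ⟨α, i⟩ = 0)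
    (μ : ℝ) (hμ : ∀ h : 1 < m α, x ⟨α, ⟨1, h⟩⟩ = μ) :
    ∀ (k : ℕ) (hk : k < m α), pwr m x k ⟨α, ⟨k, hk⟩⟩ = μ ^ k := by
  intro k
  induction k with
  | zero =>
    intro hk
    show blockUnit m ⟨α, ⟨0, hk⟩⟩ = μ ^ 0
    simp [blockUnit]
  | succ k ih =>
    intro hk
    have h1 : 1 < m α := by omega
    have hkm : k < m α := by omega
    have hsw : pwr m x (k+1) = blockProd m (pwr m x k) x := by
      show blockProd m x (pwr m x k) = _
      exact dh_bp_comm _ _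
    rw [hsw]
    have key := dh_ord_mul_lead (a := k) (b := 1) hkm h1 (show k + 1 < m α from hk)
      (dh_pwr_ord hx1 k) hx1
    rw [key, hμ h1, ih hkm]
    ring

lemma dh_span_powers (hm : ∀ α, 0 < m α) (𝓔 : BV m)
    (hdist : ∀ α β : Fin r, α ≠ β → 𝓔 ⟨α, ⟨0, hm α⟩⟩ ≠ 𝓔 ⟨β, ⟨0, hm β⟩⟩)
    (h2 : ∀ α : Fin r, ∀ h : 2 ≤ m α, 𝓔 ⟨α, ⟨1, h⟩⟩ ≠ 0) :
    ∀ z : BV m, z ∈ Submodule.span ℝ (Set.range (pwr m 𝓔)) := by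
  set S := Submodule.span ℝ (Set.range (pwr m 𝓔)) with hS
  have hmem : ∀ k, pwr m 𝓔 k ∈ S := fun k => Submodule.subset_span ⟨k, rfl⟩
  have hmul : ∀ x, x ∈ S → ∀ y, y ∈ S → blockProd m x y ∈ S := by
    have key : ∀ k, ∀ y, y ∈ S → blockProd m (pwr m 𝓔 k) y ∈ S := by
      intro k y hy
      refine Submodule.span_induction ?_ ?_ ?_ ?_ hy
        (p := fun y _ => blockProd m (pwr m 𝓔 k) y ∈ S)
      · rintro _ ⟨l, rfl⟩
        rw [← dh_pwr_add]
        exact hmem _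
      · show blockProd m (pwr m 𝓔 k) 0 ∈ S
        rw [dh_bp_zero_right]; exact zero_mem S
      · intro a b _ _ ha hb; rw [dh_bp_add_right]; exact add_mem ha hb
      · intro c a _ ha; rw [dh_bp_smul_right]; exact Submodule.smul_mem S c ha
    intro x hx y hy
    refine Submodule.span_induction ?_ ?_ ?_ ?_ hx
      (p := fun x _ => blockProd m x y ∈ S)
    · rintro _ ⟨k, rfl⟩; exact key k y hy
    · show blockProd m 0 y ∈ S
      rw [dh_bp_zero_left]; exact zero_mem S
    · intro a b _ _ ha hb; rw [dh_bp_add_left]; exact add_mem ha hb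
    · intro c a _ ha; rw [dh_bp_smul_left]; exact Submodule.smul_mem S c ha
  have hpwrS : ∀ x, x ∈ S → ∀ k, pwr m x k ∈ S := by
    intro x hx k
    induction k with
    | zero => exact hmem 0
    | succ k ih => exact hmul x hx _ ih
  have heS : blockUnit m ∈ S := hmem 0
  have hES : 𝓔 ∈ S := by
    have h1 : pwr m 𝓔 1 = 𝓔 := by
      show blockProd m 𝓔 (blockUnit m) = 𝓔
      exact dh_bp_one_right 𝓔
    rw [← h1]; exact hmem 1
  have hNS : ∀ β : Fin r, 𝓔 - 𝓔 ⟨β, ⟨0, hm β⟩⟩ • blockUnit m ∈ S :=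
    fun β => sub_mem hES (Submodule.smul_mem S _ heS)
  have hNord : ∀ β : Fin r, ∀ i : Fin (m β), (i:ℕ) < 1 →
      (𝓔 - 𝓔 ⟨β, ⟨0, hm β⟩⟩ • blockUnit m) ⟨β, i⟩ = 0 := by
    intro β i hi
    have hi0 : i = ⟨0, hm β⟩ := Fin.ext (show (i:ℕ) = 0 by omega)
    subst hi0
    simp [blockUnit]
  have hN0 : ∀ α β : Fin r,
      (𝓔 - 𝓔 ⟨β, ⟨0, hm β⟩⟩ • blockUnit m) ⟨α, ⟨0, hm α⟩⟩
      = 𝓔 ⟨α, ⟨0, hm α⟩⟩ - 𝓔 ⟨β, ⟨0, hm β⟩⟩ := by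
    intro α β
    simp [blockUnit]
  have pick : ∀ (T : Finset (Fin r)) (α : Fin r), α ∉ T →
      ∃ z, z ∈ S ∧ (∀ β ∈ T, ∀ i : Fin (m β), z ⟨β, i⟩ = 0) ∧ z ⟨α, ⟨0, hm α⟩⟩ ≠ 0 := by
    intro T
    induction T using Finset.induction_on with
    | empty =>
      intro α _
      refine ⟨blockUnit m, heS, by simp, ?_⟩
      simp [blockUnit]
    | @insert β T hβT ih =>
      intro α hα
      have hαβ : α ≠ β := fun h => hα (h ▸ Finset.mem_insert_self β T)
      obtain ⟨z, hzS, hzT, hz0⟩ := ih α (fun h => hα (Finset.mem_insert_of_mem h))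
      refine ⟨blockProd m z (pwr m (𝓔 - 𝓔 ⟨β, ⟨0, hm β⟩⟩ • blockUnit m) (m β)),
        hmul _ hzS _ (hpwrS _ (hNS β) _), ?_, ?_⟩
      · intro γ hγ i
        rcases Finset.mem_insert.mp hγ with h | h
        · subst h
          rw [dh_bp_comm]
          exact dh_block_local _ (fun i' => dh_pwr_ord (hNord γ) (m γ) i' i'.isLt) i
        · exact dh_block_local _ (fun i' => hzT γ h i') i
      · rw [dh_hom0 hm, dh_pwr_hom0 hm, hN0 α β]
        exact mul_ne_zero hz0 (pow_ne_zero _ (sub_ne_zero.mpr (hdist α β hαβ)))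
  have KEY : ∀ (α : Fin r) (j : Fin (m α)),
      (∀ i : Fin (m α), (j:ℕ) < (i:ℕ) →
        (fun q : (α' : Fin r) × Fin (m α') =>
          if (⟨α, i⟩ : (α' : Fin r) × Fin (m α')) = q then (1:ℝ) else 0) ∈ S) →
      (fun q : (α' : Fin r) × Fin (m α') =>
        if (⟨α, j⟩ : (α' : Fin r) × Fin (m α')) = q then (1:ℝ) else 0) ∈ S := by
    intro α j hind
    obtain ⟨z, hzS, hzT, hz0⟩ := pick (Finset.univ.erase α) α (Finset.notMem_erase α _)
    set μ : ℝ := if h : 1 < m α then 𝓔 ⟨α, ⟨1, h⟩⟩ else 1 with hμdef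
    have hμ0 : μ ≠ 0 := by
      rw [hμdef]
      split_ifs with h
      · exact h2 α h
      · exact one_ne_zero
    have hμN : ∀ h : 1 < m α, (𝓔 - 𝓔 ⟨α, ⟨0, hm α⟩⟩ • blockUnit m) ⟨α, ⟨1, h⟩⟩ = μ := by
      intro h
      rw [hμdef, dif_pos h]
      simp [blockUnit]
    set W : BV m := blockProd m (pwr m (𝓔 - 𝓔 ⟨α, ⟨0, hm α⟩⟩ • blockUnit m) (j:ℕ)) z with hWdef
    have hWS : W ∈ S := hmul _ (hpwrS _ (hNS α) _) _ hzS
    have hWβ : ∀ β : Fin r, β ≠ α → ∀ i : Fin (m β), W ⟨β, i⟩ = 0 := by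
      intro β hβ i
      rw [hWdef, dh_bp_comm]
      exact dh_block_local _
        (fun i' => hzT β (Finset.mem_erase.mpr ⟨hβ, Finset.mem_univ β⟩) i') i
    have hWlow : ∀ i : Fin (m α), (i:ℕ) < (j:ℕ) → W ⟨α, i⟩ = 0 := by
      intro i hi
      rw [hWdef]
      exact dh_ord_mul (a := (j:ℕ)) (b := 0) (dh_pwr_ord (hNord α) (j:ℕ))
        (fun _ hi' => absurd hi' (Nat.not_lt_zero _)) i (by omega)
    have hWj : W ⟨α, j⟩ = μ ^ (j:ℕ) * z ⟨α, ⟨0, hm α⟩⟩ := by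
      have key := dh_ord_mul_lead (w := z) (a := (j:ℕ)) (b := 0) j.isLt (hm α) (by simpa using j.isLt)
        (dh_pwr_ord (hNord α) (j:ℕ)) (fun _ hi' => absurd hi' (Nat.not_lt_zero _))
      have lead := dh_pwr_lead (𝓔 - 𝓔 ⟨α, ⟨0, hm α⟩⟩ • blockUnit m) α (hNord α) μ hμN (j:ℕ) j.isLt
      rw [hWdef]
      calc blockProd m (pwr m (𝓔 - 𝓔 ⟨α, ⟨0, hm α⟩⟩ • blockUnit m) (j:ℕ)) z ⟨α, j⟩
          = pwr m (𝓔 - 𝓔 ⟨α, ⟨0, hm α⟩⟩ • blockUnit m) (j:ℕ) ⟨α, ⟨(j:ℕ), j.isLt⟩⟩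
            * z ⟨α, ⟨0, hm α⟩⟩ := key
        _ = μ ^ (j:ℕ) * z ⟨α, ⟨0, hm α⟩⟩ := by rw [lead]
    have hc0 : μ ^ (j:ℕ) * z ⟨α, ⟨0, hm α⟩⟩ ≠ 0 := mul_ne_zero (pow_ne_zero _ hμ0) hz0
    have hexp : (fun q : (α' : Fin r) × Fin (m α') =>
        if (⟨α, j⟩ : (α' : Fin r) × Fin (m α')) = q then (1:ℝ) else 0)
        = (μ ^ (j:ℕ) * z ⟨α, ⟨0, hm α⟩⟩)⁻¹ •
          (W - ∑ i : Fin (m α), (if (j:ℕ) < (i:ℕ) then W ⟨α, i⟩ else 0) •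
            (fun q : (α' : Fin r) × Fin (m α') =>
              if (⟨α, i⟩ : (α' : Fin r) × Fin (m α')) = q then (1:ℝ) else 0)) := by
      funext q
      obtain ⟨γ, i⟩ := q
      rw [Pi.smul_apply, Pi.sub_apply, Finset.sum_apply]
      simp only [Pi.smul_apply, smul_eq_mul]
      by_cases hγ : γ = α
      · subst hγ
        have hσ : ∀ i' : Fin (m γ),
            (if (⟨γ, i'⟩ : (α' : Fin r) × Fin (m α')) = ⟨γ, i⟩ then (1:ℝ) else 0)
            = if (i':ℕ) = (i:ℕ) then (1:ℝ) else 0 := by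
          intro i'
          by_cases h : (i':ℕ) = (i:ℕ)
          · rw [if_pos (congrArg (Sigma.mk γ) (Fin.ext h)), if_pos h]
          · rw [if_neg (fun hc => h (by
              injection hc with h1 h2
              exact congrArg Fin.val h2)), if_neg h]
        have hsum : (∑ i' : Fin (m γ), (if (j:ℕ) < (i':ℕ) then W ⟨γ, i'⟩ else 0) *
            (if (⟨γ, i'⟩ : (α' : Fin r) × Fin (m α')) = ⟨γ, i⟩ then (1:ℝ) else 0))
            = if (j:ℕ) < (i:ℕ) then W ⟨γ, i⟩ else 0 := by
          have hterm : ∀ i' : Fin (m γ),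
              (if (j:ℕ) < (i':ℕ) then W ⟨γ, i'⟩ else 0) *
                (if (⟨γ, i'⟩ : (α' : Fin r) × Fin (m α')) = ⟨γ, i⟩ then (1:ℝ) else 0)
              = if (i':ℕ) = (i:ℕ) then (if (j:ℕ) < (i':ℕ) then W ⟨γ, i'⟩ else 0) else 0 := by
            intro i'
            rw [hσ i']
            by_cases h : (i':ℕ) = (i:ℕ)
            · rw [if_pos h, if_pos h, mul_one]
            · rw [if_neg h, if_neg h, mul_zero]
          rw [Finset.sum_congr rfl (fun i' _ => hterm i'), dh_sum_ite_fin, dif_pos i.isLt]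
        rw [hsum, hσ j]
        rcases lt_trichotomy (i:ℕ) (j:ℕ) with h | h | h
        · rw [if_neg (show ¬(j:ℕ) = (i:ℕ) by omega), if_neg (show ¬(j:ℕ) < (i:ℕ) by omega),
            hWlow i h]
          ring
        · have hij : j = i := Fin.ext h.symm
          rw [if_pos (show (j:ℕ) = (i:ℕ) by omega), if_neg (show ¬(j:ℕ) < (i:ℕ) by omega),
            ← hij, hWj, sub_zero, inv_mul_cancel₀ hc0]
        · rw [if_neg (show ¬(j:ℕ) = (i:ℕ) by omega), if_pos (show (j:ℕ) < (i:ℕ) from h)]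
          ring
      · have hzero : ∀ i' : Fin (m α),
            (if (⟨α, i'⟩ : (α' : Fin r) × Fin (m α')) = ⟨γ, i⟩ then (1:ℝ) else 0) = 0 :=
          fun i' => if_neg (fun hc => hγ (by injection hc with h1 h2; exact h1.symm))
        rw [hWβ γ hγ i,
          Finset.sum_congr rfl (fun i' _ => by rw [hzero i', mul_zero]),
          Finset.sum_const_zero,
          if_neg (fun hc : (⟨α, j⟩ : (α' : Fin r) × Fin (m α')) = ⟨γ, i⟩ =>
            hγ (by injection hc with h1 h2; exact h1.symm))]
        ring
    rw [hexp]
    refine Submodule.smul_mem S _ (sub_mem hWS (Submodule.sum_mem S ?_))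
    intro i _
    by_cases hji : (j:ℕ) < (i:ℕ)
    · rw [if_pos hji]; exact Submodule.smul_mem S _ (hind i hji)
    · rw [if_neg hji, zero_smul]; exact zero_mem S
  have hsingle : ∀ (α : Fin r) (j : Fin (m α)),
      (fun q : (α' : Fin r) × Fin (m α') =>
        if (⟨α, j⟩ : (α' : Fin r) × Fin (m α')) = q then (1:ℝ) else 0) ∈ S := by
    have main : ∀ (t : ℕ) (α : Fin r) (j : Fin (m α)), m α ≤ (j:ℕ) + 1 + t →
        (fun q : (α' : Fin r) × Fin (m α') =>
          if (⟨α, j⟩ : (α' : Fin r) × Fin (m α')) = q then (1:ℝ) else 0) ∈ S := by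
      intro t
      induction t with
      | zero => intro α j hj; exact KEY α j (fun i hi => absurd i.isLt (by omega))
      | succ t ih => intro α j hj; exact KEY α j (fun i hi => ih α i (by omega))
    intro α j
    exact main (m α) α j (by omega)
  intro z
  rw [pi_eq_sum_univ z]
  refine Submodule.sum_mem S fun q _ => ?_
  obtain ⟨α, jj⟩ := q
  exact Submodule.smul_mem S _ (hsingle α jj)

end AuxDH

section AuxAnalysis
variable {r : ℕ} {m : Fin r → ℕ}

lemma dh_sum_mul_pd {ι : Type*} [Fintype ι] [DecidableEq ι]
    (f : (ι → ℝ) → ℝ) (u w : ι → ℝ) :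
    (∑ s, w s * pd s f u) = fderiv ℝ f u w := by
  have h1 : ∀ s : ι, w s * pd s f u = fderiv ℝ f u (Pi.single s (w s)) := by
    intro s
    have h2 : w s • (Pi.single s 1 : ι → ℝ) = (Pi.single s (w s) : ι → ℝ) := by
      funext t
      by_cases h : t = s
      · subst h; simp
      · simp [Pi.single_eq_of_ne h]
    rw [pd, ← h2, map_smul, smul_eq_mul]
  rw [Finset.sum_congr rfl fun s _ => h1 s, ← map_sum]
  congr 1
  exact Finset.univ_sum_single w

lemma dh_lieBr_eq {ι : Type*} [Fintype ι] [DecidableEq ι]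
    (X Y : (ι → ℝ) → ι → ℝ) (u : ι → ℝ) (i : ι) :
    lieBr X Y u i = fderiv ℝ (fun v => Y v i) u (X u) - fderiv ℝ (fun v => X v i) u (Y u) := by
  simp only [lieBr]
  rw [Finset.sum_sub_distrib, dh_sum_mul_pd, dh_sum_mul_pd]

lemma dh_fderiv_bp (X Y : BV m → BV m) (u : BV m)
    (hX : ∀ q, DifferentiableAt ℝ (fun v => X v q) u)
    (hY : ∀ q, DifferentiableAt ℝ (fun v => Y v q) u)
    (i : (α : Fin r) × Fin (m α)) (w : BV m) :
    fderiv ℝ (fun v => blockProd m (X v) (Y v) i) u w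
      = blockProd m (fun q => fderiv ℝ (fun v => X v q) u w) (Y u) i
        + blockProd m (X u) (fun q => fderiv ℝ (fun v => Y v q) u w) i := by
  have hterm : ∀ j k : Fin (m i.1), DifferentiableAt ℝ
      (fun v => if (j:ℕ)+(k:ℕ) = (i.2:ℕ) then X v ⟨i.1,j⟩ * Y v ⟨i.1,k⟩ else 0) u := by
    intro j k
    by_cases h : (j:ℕ)+(k:ℕ) = (i.2:ℕ)
    · simp only [if_pos h]; exact (hX _).mul (hY _)
    · simp only [if_neg h]; exact differentiableAt_const 0
  simp only [blockProd]
  rw [fderiv_fun_sum (fun j _ => DifferentiableAt.fun_sum (fun k _ => hterm j k)),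
    ContinuousLinearMap.sum_apply, ← Finset.sum_add_distrib]
  refine Finset.sum_congr rfl fun j _ => ?_
  rw [fderiv_fun_sum (fun k _ => hterm j k), ContinuousLinearMap.sum_apply, ← Finset.sum_add_distrib]
  refine Finset.sum_congr rfl fun k _ => ?_
  by_cases h : (j:ℕ)+(k:ℕ) = (i.2:ℕ)
  · simp only [if_pos h]
    rw [fderiv_fun_mul (hX _) (hY _)]
    simp only [ContinuousLinearMap.add_apply, ContinuousLinearMap.coe_smul',
      Pi.smul_apply, smul_eq_mul]
    ring
  · simp only [if_neg h]
    simp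

lemma dh_fderiv_bpc (E : BV m → BV m) (u : BV m)
    (hE : ∀ q, DifferentiableAt ℝ (fun v => E v q) u)
    (x : BV m) (q : (α : Fin r) × Fin (m α)) (w : BV m) :
    fderiv ℝ (fun v => blockProd m (E v) x q) u w
      = blockProd m (fun p => fderiv ℝ (fun v => E v p) u w) x q := by
  have h : fderiv ℝ (fun v => blockProd m (E v) x q) u w
      = blockProd m (fun p => fderiv ℝ (fun v => E v p) u w) x q
        + blockProd m (E u) (fun p => fderiv ℝ (fun v : BV m => x p) u w) q :=
    dh_fderiv_bp E (fun _ => x) u hE (fun p => differentiableAt_const _) q w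
  have h0 : (fun p => fderiv ℝ (fun v : BV m => x p) u w) = (0 : BV m) := by
    funext p
    simp
  rw [h, h0, dh_bp_zero_right]
  simp

lemma dh_Nform (E : BV m → BV m) (u : BV m)
    (hE : ∀ q, DifferentiableAt ℝ (fun v => E v q) u) (x y : BV m) :
    nij (fun v w => blockProd m (E v) w) (fun _ => x) (fun _ => y) u
    = blockProd m (fun q => fderiv ℝ (fun v => E v q) u (blockProd m (E u) x)) y
      - blockProd m (fun q => fderiv ℝ (fun v => E v q) u (blockProd m (E u) y)) x
      + blockProd m (E u) (blockProd m (fun q => fderiv ℝ (fun v => E v q) u y) x)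
      - blockProd m (E u) (blockProd m (fun q => fderiv ℝ (fun v => E v q) u x) y) := by
  have T1 : lieBr (fun v => blockProd m (E v) x) (fun v => blockProd m (E v) y) u
      = blockProd m (fun q => fderiv ℝ (fun v => E v q) u (blockProd m (E u) x)) y
        - blockProd m (fun q => fderiv ℝ (fun v => E v q) u (blockProd m (E u) y)) x := by
    funext q
    simp only [dh_lieBr_eq]
    rw [dh_fderiv_bpc E u hE y q (blockProd m (E u) x),
      dh_fderiv_bpc E u hE x q (blockProd m (E u) y)]
    simp [Pi.sub_apply]
  have T2 : lieBr (fun v => blockProd m (E v) x) (fun _ => y) u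
      = -(blockProd m (fun q => fderiv ℝ (fun v => E v q) u y) x) := by
    funext q
    simp only [dh_lieBr_eq]
    rw [dh_fderiv_bpc E u hE x q y]
    simp
  have T3 : lieBr (fun _ => x) (fun v => blockProd m (E v) y) u
      = blockProd m (fun q => fderiv ℝ (fun v => E v q) u x) y := by
    funext q
    simp only [dh_lieBr_eq]
    rw [dh_fderiv_bpc E u hE y q x]
    simp
  have T4 : lieBr (fun _ : BV m => x) (fun _ => y) u = 0 := by
    funext q
    simp only [dh_lieBr_eq]
    simp
  simp only [nij]
  rw [T1, T2, T3, T4, dh_bp_neg_right, dh_bp_zero_right, dh_bp_zero_right]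
  abel

lemma dh_Kform (E X Y : BV m → BV m) (u : BV m)
    (hE : ∀ q, DifferentiableAt ℝ (fun v => E v q) u)
    (hX : ∀ q, DifferentiableAt ℝ (fun v => X v q) u)
    (hY : ∀ q, DifferentiableAt ℝ (fun v => Y v q) u) :
    Kdef m E X Y u
    = blockProd m (fun q => fderiv ℝ (fun v => E v q) u (X u)) (Y u)
      + blockProd m (X u) (fun q => fderiv ℝ (fun v => E v q) u (Y u))
      - (fun q => fderiv ℝ (fun v => E v q) u (blockProd m (X u) (Y u)))
      - blockProd m (blockProd m (fun q => fderiv ℝ (fun v => E v q) u (blockUnit m)) (X u)) (Y u) := by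
  have T1 : lieBr E (fun v => blockProd m (X v) (Y v)) u
      = (blockProd m (fun q => fderiv ℝ (fun v => X v q) u (E u)) (Y u)
         + blockProd m (X u) (fun q => fderiv ℝ (fun v => Y v q) u (E u)))
        - (fun q => fderiv ℝ (fun v => E v q) u (blockProd m (X u) (Y u))) := by
    funext q
    simp only [dh_lieBr_eq]
    rw [dh_fderiv_bp X Y u hX hY q (E u)]
    simp [Pi.sub_apply, Pi.add_apply]
  have T2 : lieBr E X u
      = (fun q => fderiv ℝ (fun v => X v q) u (E u))
        - (fun q => fderiv ℝ (fun v => E v q) u (X u)) := by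
    funext q
    simp only [dh_lieBr_eq]
    simp [Pi.sub_apply]
  have T3 : lieBr E Y u
      = (fun q => fderiv ℝ (fun v => Y v q) u (E u))
        - (fun q => fderiv ℝ (fun v => E v q) u (Y u)) := by
    funext q
    simp only [dh_lieBr_eq]
    simp [Pi.sub_apply]
  have T4 : lieBr (fun _ => blockUnit m) E u
      = (fun q => fderiv ℝ (fun v => E v q) u (blockUnit m)) := by
    funext q
    simp only [dh_lieBr_eq]
    simp
  simp only [Kdef]
  rw [T1, T2, T3, T4, dh_bp_sub_left, dh_bp_sub_right]
  abel

lemma dh_derivation (hm : ∀ α, 0 < m α) (E0 : BV m)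
    (hdist : ∀ α β : Fin r, α ≠ β → E0 ⟨α, ⟨0, hm α⟩⟩ ≠ E0 ⟨β, ⟨0, hm β⟩⟩)
    (h2 : ∀ α : Fin r, ∀ h : 2 ≤ m α, E0 ⟨α, ⟨1, h⟩⟩ ≠ 0)
    (G : BV m → BV m)
    (hGadd : ∀ z w, G (z + w) = G z + G w)
    (hGsmul : ∀ (c : ℝ) z, G (c • z) = c • G z)
    (hGe : G (blockUnit m) = 0)
    (hG : ∀ z, G (blockProd m E0 z) = blockProd m E0 (G z) + blockProd m (G E0) z)
    (x y : BV m) :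
    G (blockProd m x y) = blockProd m (G x) y + blockProd m x (G y) := by
  have hG0 : G 0 = 0 := by
    have h := hGsmul 0 0
    simpa using h
  have hDmul : ∀ z w,
      G (blockProd m (blockProd m E0 z) w) - blockProd m (G (blockProd m E0 z)) w
        - blockProd m (blockProd m E0 z) (G w)
      = blockProd m E0
          (G (blockProd m z w) - blockProd m (G z) w - blockProd m z (G w)) := by
    intro z w
    rw [dh_bp_assoc, hG, hG, dh_bp_add_left, dh_bp_sub_right, dh_bp_sub_right,
      dh_bp_assoc, dh_bp_assoc, dh_bp_assoc]
    abel
  have hDpow : ∀ k w,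
      G (blockProd m (pwr m E0 k) w) - blockProd m (G (pwr m E0 k)) w
        - blockProd m (pwr m E0 k) (G w) = 0 := by
    intro k
    induction k with
    | zero =>
      intro w
      show G (blockProd m (blockUnit m) w) - blockProd m (G (blockUnit m)) w
        - blockProd m (blockUnit m) (G w) = 0
      rw [dh_bp_one_left, hGe, dh_bp_zero_left, dh_bp_one_left]
      abel
    | succ k ih =>
      intro w
      show G (blockProd m (blockProd m E0 (pwr m E0 k)) w)
          - blockProd m (G (blockProd m E0 (pwr m E0 k))) w
          - blockProd m (blockProd m E0 (pwr m E0 k)) (G w) = 0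
      rw [hDmul, ih w, dh_bp_zero_right]
  have key : G (blockProd m x y) - blockProd m (G x) y - blockProd m x (G y) = 0 := by
    have hx := dh_span_powers hm E0 hdist h2 x
    refine Submodule.span_induction ?_ ?_ ?_ ?_ hx
      (p := fun x _ => G (blockProd m x y) - blockProd m (G x) y - blockProd m x (G y) = 0)
    · rintro _ ⟨k, rfl⟩
      exact hDpow k y
    · show G (blockProd m 0 y) - blockProd m (G 0) y - blockProd m 0 (G y) = 0
      rw [dh_bp_zero_left, hG0, dh_bp_zero_left, dh_bp_zero_left]
      simp
    · intro a b _ _ ha hb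
      show G (blockProd m (a + b) y) - blockProd m (G (a + b)) y
        - blockProd m (a + b) (G y) = 0
      rw [dh_bp_add_left, hGadd, hGadd, dh_bp_add_left, dh_bp_add_left]
      linear_combination ha + hb
    · intro c a _ ha
      show G (blockProd m (c • a) y) - blockProd m (G (c • a)) y
        - blockProd m (c • a) (G y) = 0
      rw [dh_bp_smul_left, hGsmul, hGsmul, dh_bp_smul_left, dh_bp_smul_left,
        ← smul_sub, ← smul_sub, ha, smul_zero]
  linear_combination key

lemma dh_endgame (hm : ∀ α, 0 < m α) (E0 : BV m) (A : BV m → BV m)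
    (hAadd : ∀ z w, A (z + w) = A z + A w)
    (hAsmul : ∀ (c : ℝ) z, A (c • z) = c • A z)
    (hdist : ∀ α β : Fin r, α ≠ β → E0 ⟨α, ⟨0, hm α⟩⟩ ≠ E0 ⟨β, ⟨0, hm β⟩⟩)
    (h2 : ∀ α : Fin r, ∀ h : 2 ≤ m α, E0 ⟨α, ⟨1, h⟩⟩ ≠ 0)
    (hR : ∀ x y : BV m,
      blockProd m (A (blockProd m E0 x)) y - blockProd m (A (blockProd m E0 y)) x
      + blockProd m E0 (blockProd m (A y) x) - blockProd m E0 (blockProd m (A x) y) = 0)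
    (x y : BV m) :
    blockProd m (A x) y + blockProd m x (A y)
      - A (blockProd m x y)
      - blockProd m (blockProd m (A (blockUnit m)) x) y = 0 := by
  set G : BV m → BV m := fun z => A z - blockProd m (A (blockUnit m)) z with hGdef
  have hGadd : ∀ z w, G (z + w) = G z + G w := by
    intro z w
    simp only [hGdef]
    rw [hAadd, dh_bp_add_right]
    abel
  have hGsmul : ∀ (c : ℝ) z, G (c • z) = c • G z := by
    intro c z
    simp only [hGdef]
    rw [hAsmul, dh_bp_smul_right, smul_sub]
  have hGe : G (blockUnit m) = 0 := by
    simp only [hGdef]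
    rw [dh_bp_one_right]
    exact sub_self _
  have hG : ∀ z, G (blockProd m E0 z) = blockProd m E0 (G z) + blockProd m (G E0) z := by
    intro z
    have h := hR z (blockUnit m)
    rw [dh_bp_one_right, dh_bp_one_right, dh_bp_one_right] at h
    simp only [hGdef]
    rw [dh_bp_sub_right, dh_bp_sub_left]
    have e3 : blockProd m (A (blockUnit m)) (blockProd m E0 z)
        = blockProd m (blockProd m (A (blockUnit m)) E0) z := (dh_bp_assoc _ _ _).symm
    rw [e3]
    linear_combination h
  have hDer := dh_derivation hm E0 hdist h2 G hGadd hGsmul hGe hG x y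
  simp only [hGdef] at hDer
  rw [dh_bp_sub_left, dh_bp_sub_right] at hDer
  have e1 : blockProd m x (blockProd m (A (blockUnit m)) y)
      = blockProd m (blockProd m (A (blockUnit m)) x) y := by
    rw [← dh_bp_assoc, dh_bp_comm x (A (blockUnit m))]
  have e2 : blockProd m (A (blockUnit m)) (blockProd m x y)
      = blockProd m (blockProd m (A (blockUnit m)) x) y := (dh_bp_assoc _ _ _).symm
  rw [e1, e2] at hDer
  linear_combination -hDer

end AuxAnalysis

/-- under the non-coincidence and nondegeneracy assumptions, vanishing of the
Nijenhuis torsion of `L = E∘` on `U` implies that `E` is an eventual identity on `U`. -/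
theorem stmt5 {r : ℕ} (m : Fin r → ℕ) (hm : ∀ α, 0 < m α)
    (U : Set (((α : Fin r) × Fin (m α)) → ℝ)) (hU : IsOpen U)
    (E : (((α : Fin r) × Fin (m α)) → ℝ) → ((α : Fin r) × Fin (m α)) → ℝ)
    (hE : ContDiffOn ℝ (⊤ : ℕ∞) E U)
    (hdist : ∀ u ∈ U, ∀ α β : Fin r, α ≠ β →
      E u ⟨α, ⟨0, hm α⟩⟩ ≠ E u ⟨β, ⟨0, hm β⟩⟩)
    (h2 : ∀ α : Fin r, ∀ h : 2 ≤ m α, ∀ u ∈ U, E u ⟨α, ⟨1, h⟩⟩ ≠ 0)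
    (hN : ∀ X Y : (((α : Fin r) × Fin (m α)) → ℝ) → ((α : Fin r) × Fin (m α)) → ℝ,
      ContDiffOn ℝ (⊤ : ℕ∞) X U → ContDiffOn ℝ (⊤ : ℕ∞) Y U →
      ∀ u ∈ U, nij (fun v w => blockProd m (E v) w) X Y u = 0) :
    ∀ X Y : (((α : Fin r) × Fin (m α)) → ℝ) → ((α : Fin r) × Fin (m α)) → ℝ,
      ContDiffOn ℝ (⊤ : ℕ∞) X U → ContDiffOn ℝ (⊤ : ℕ∞) Y U →
      ∀ u ∈ U, Kdef m E X Y u = 0 := by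
  intro X Y hX hY u hu
  have hEd : ∀ q, DifferentiableAt ℝ (fun v => E v q) u := fun q =>
    differentiableAt_pi.mp ((hE.differentiableOn (by simp)).differentiableAt (hU.mem_nhds hu)) q
  have hXd : ∀ q, DifferentiableAt ℝ (fun v => X v q) u := fun q =>
    differentiableAt_pi.mp ((hX.differentiableOn (by simp)).differentiableAt (hU.mem_nhds hu)) q
  have hYd : ∀ q, DifferentiableAt ℝ (fun v => Y v q) u := fun q =>
    differentiableAt_pi.mp ((hY.differentiableOn (by simp)).differentiableAt (hU.mem_nhds hu)) q
  rw [dh_Kform E X Y u hEd hXd hYd]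
  exact dh_endgame hm (E u) (fun z q => fderiv ℝ (fun v => E v q) u z)
    (fun z w => funext fun q => (fderiv ℝ (fun v => E v q) u).map_add z w)
    (fun c z => funext fun q => (fderiv ℝ (fun v => E v q) u).map_smul c z)
    (fun α β hab => hdist u hu α β hab)
    (fun α h => h2 α h u hu)
    (fun x y => (dh_Nform E u hEd x y).symm.trans
      (hN (fun _ => x) (fun _ => y) contDiffOn_const contDiffOn_const u hu))
    (X u) (Y u)
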